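/- arXiv:2402.13078 — 2 statements merged into one kernel-verified Lean document; each statement's English description precedes it below -/
import Mathlib

section
/- Let Ω ⊆ ℝ^N be open and C ⊆ Ω. The following are equivalent: (a) C is L^0-polar in Ω, i.e. there exists u ∈ L^0(Ω) with C ⊆ {x ∈ Ω : the approximate limit ũ(x) exists and |ũ(x)| = +∞}; (b) λ^N(C) = 0 (C has Lebesgue outer measure zero); (c) there exists a sequence of open sets U_k ⊆ Ω containing C with λ^N(U_k) → 0. -/
open MeasureTheory Metric Filter Set
open scoped ENNReal Topology symmDiff

noncomputable section

abbrev Euc (N : ℕ) : Type := EuclideanSpace ℝ (Fin N)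

variable {N : ℕ}

/-- The divergence of a vector field `φ : ℝ^N → ℝ^N`. -/
def diverg (φ : Euc N → Euc N) (x : Euc N) : ℝ :=
  ∑ i : Fin N, fderiv ℝ φ x (EuclideanSpace.single i 1) i

/-- The admissible test vector fields for the variation in `Ω`:
`C^1`, compactly supported in `Ω`, with `‖φ‖ ≤ 1`. -/
def TestVF (Ω : Set (Euc N)) : Set (Euc N → Euc N) :=
  {φ | ContDiff ℝ 1 φ ∧ HasCompactSupport φ ∧ tsupport φ ⊆ Ω ∧ ∀ x, ‖φ x‖ ≤ 1}

/-- The total variation `V(u, Ω)`. -/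
def variation (u : Euc N → ℝ) (Ω : Set (Euc N)) : ℝ≥0∞ :=
  ⨆ φ ∈ TestVF Ω, ENNReal.ofReal (∫ x in Ω, u x * diverg φ x)

/-- The perimeter `P(A, Ω)` of `A` in `Ω`. -/
def perimeter (A Ω : Set (Euc N)) : ℝ≥0∞ :=
  ⨆ φ ∈ TestVF Ω, ENNReal.ofReal (∫ x in A, diverg φ x)

/-- `u ∈ BV(Ω)`. -/
def MemBV (u : Euc N → ℝ) (Ω : Set (Euc N)) : Prop :=
  IntegrableOn u Ω volume ∧ variation u Ω < ⊤

/-- `u ∈ BV_loc(Ω)`. -/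
def MemBVloc (u : Euc N → ℝ) (Ω : Set (Euc N)) : Prop :=
  ∀ Ω' : Set (Euc N), IsOpen Ω' → IsCompact (closure Ω') → closure Ω' ⊆ Ω → MemBV u Ω'

/-- `u ∈ GBV(Ω)`: measurable, and every truncation `(-m) ∨ u ∧ m` is in `BV_loc(Ω)`. -/
def MemGBV (u : Euc N → ℝ) (Ω : Set (Euc N)) : Prop :=
  AEMeasurable u (volume.restrict Ω) ∧
    ∀ m : ℝ, 0 < m → MemBVloc (fun x => max (-m) (min (u x) m)) Ω

/-- `A` has locally finite perimeter in `Ω`. -/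
def HasLocFinPerimeter (A Ω : Set (Euc N)) : Prop :=
  ∀ Ω' : Set (Euc N), IsOpen Ω' → IsCompact (closure Ω') → closure Ω' ⊆ Ω →
    perimeter A Ω' < ⊤

/-- `A` has density `t` at `x`. -/
def HasDensity (A : Set (Euc N)) (x : Euc N) (t : ℝ) : Prop :=
  Tendsto (fun ρ : ℝ => volume (A ∩ ball x ρ) / volume (ball x ρ)) (𝓝[>] 0)
    (𝓝 (ENNReal.ofReal t))

/-- The approximate upper limit `u⁺(x)` of `u` at `x` (relative to `Ω`), with `inf ∅ = ⊤`. -/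
def approxUpper (u : Euc N → ℝ) (Ω : Set (Euc N)) (x : Euc N) : EReal :=
  sInf {t : EReal | ∃ s : ℝ, t = (s : EReal) ∧ HasDensity {y | y ∈ Ω ∧ s < u y} x 0}

/-- The approximate lower limit `u⁻(x)` of `u` at `x` (relative to `Ω`), with `sup ∅ = ⊥`. -/
def approxLower (u : Euc N → ℝ) (Ω : Set (Euc N)) (x : Euc N) : EReal :=
  sSup {t : EReal | ∃ s : ℝ, t = (s : EReal) ∧ HasDensity {y | y ∈ Ω ∧ u y < s} x 0}

/-- The approximate limit `ũ(x)` exists (i.e. `u⁺(x) = u⁻(x)`) and is `+∞`. -/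
def HasApproxLimitTop (u : Euc N → ℝ) (Ω : Set (Euc N)) (x : Euc N) : Prop :=
  approxUpper u Ω x = ⊤ ∧ approxLower u Ω x = ⊤

/-- The approximate limit `ũ(x)` exists and `|ũ(x)| = +∞`. -/
def HasInfApproxLimit (u : Euc N → ℝ) (Ω : Set (Euc N)) (x : Euc N) : Prop :=
  (approxUpper u Ω x = ⊤ ∧ approxLower u Ω x = ⊤) ∨
    (approxUpper u Ω x = ⊥ ∧ approxLower u Ω x = ⊥)

/-- `C` is `L⁰`-polar in `Ω`. -/
def L0Polar (C Ω : Set (Euc N)) : Prop :=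
  ∃ u : Euc N → ℝ, AEMeasurable u (volume.restrict Ω) ∧
    C ⊆ {x | x ∈ Ω ∧ HasInfApproxLimit u Ω x}

/-- `C` is `BV`-polar in `Ω`. -/
def BVPolar (C Ω : Set (Euc N)) : Prop :=
  ∃ u : Euc N → ℝ, MemBV u Ω ∧ C ⊆ {x | x ∈ Ω ∧ HasInfApproxLimit u Ω x}

/-- `C` is `GBV`-polar in `Ω`. -/
def GBVPolar (C Ω : Set (Euc N)) : Prop :=
  ∃ u : Euc N → ℝ, MemGBV u Ω ∧ C ⊆ {x | x ∈ Ω ∧ HasInfApproxLimit u Ω x}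

/-- The set `A^{(1)}` of points of `Ω` where `A` has density `1`. -/
def densityOne (A Ω : Set (Euc N)) : Set (Euc N) :=
  {x | x ∈ Ω ∧ HasDensity A x 1}

/-!
(a) ⇒ (b): if `ũ(x) = ±∞`, then every set `{|u| < n}` has density `0` at `x`; but by Lebesgue's
density theorem almost every point of `{|u| < n}` is a density-one point of it, and `x` lies in
`{|u| < n}` once `n > |u x|`.

(b) ⇒ (a): cover `C` by open sets `V k` with `∑ λ(V k) < ∞`. Then `∑ k, 1_{V k}` is integrable,
hence finite a.e., and it is `≥ m` on the open neighbourhood `⋂_{k < m} V k` of `C`, so its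
approximate limit is `+∞` on `C`.

(b) ⇔ (c) is outer regularity of Lebesgue measure.
-/

section Density

variable {S T W : Set (Euc N)} {x : Euc N}

lemma ball_ae_eq_closedBall {E : Type*} [NormedAddCommGroup E] [NormedSpace ℝ E]
    [MeasurableSpace E] [BorelSpace E] [FiniteDimensional ℝ E] (μ : Measure E)
    [μ.IsAddHaarMeasure] (x : E) {ρ : ℝ} (hρ : ρ ≠ 0) : ball x ρ =ᵐ[μ] closedBall x ρ := by
  refine ae_eq_set.2 ⟨by simp [sdiff_eq_empty.2 ball_subset_closedBall], ?_⟩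
  rw [closedBall_sdiff_ball]
  exact Measure.addHaar_sphere_of_ne_zero μ x hρ

lemma hasDensity_zero_of_measure_inter_eq_zero (hW : W ∈ 𝓝 x) (h : volume (S ∩ W) = 0) :
    HasDensity S x 0 := by
  obtain ⟨ε, hε, hball⟩ := Metric.mem_nhds_iff.1 hW
  rw [HasDensity, ENNReal.ofReal_zero]
  refine tendsto_const_nhds.congr' ?_
  filter_upwards [Ioo_mem_nhdsGT hε] with ρ hρ
  have hball_sub : ball x ρ ⊆ W := (ball_subset_ball hρ.2.le).trans hball
  rw [measure_mono_null (inter_subset_inter_right S hball_sub) h, ENNReal.zero_div]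

lemma hasDensity_one_of_measure_diff_eq_zero (hW : W ∈ 𝓝 x) (h : volume (W \ S) = 0) :
    HasDensity S x 1 := by
  obtain ⟨ε, hε, hball⟩ := Metric.mem_nhds_iff.1 hW
  rw [HasDensity, ENNReal.ofReal_one]
  refine tendsto_const_nhds.congr' ?_
  filter_upwards [Ioo_mem_nhdsGT hε] with ρ hρ
  have hball_sub : ball x ρ ⊆ W := (ball_subset_ball hρ.2.le).trans hball
  have hfull : volume (ball x ρ ∩ S) = volume (ball x ρ) :=
    measure_inter_conull' (measure_mono_null (sdiff_subset_sdiff_left hball_sub) h)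
  rw [inter_comm, hfull,
    ENNReal.div_self (measure_ball_pos volume x hρ.1).ne' measure_ball_lt_top.ne]

lemma HasDensity.unique {s t : ℝ} (hs : HasDensity S x s) (ht : HasDensity S x t)
    (hs₀ : 0 ≤ s) (ht₀ : 0 ≤ t) : s = t :=
  (ENNReal.ofReal_eq_ofReal_iff hs₀ ht₀).1 (tendsto_nhds_unique hs ht)

lemma HasDensity.mono (hST : S ⊆ T) (hT : HasDensity T x 0) : HasDensity S x 0 := by
  rw [HasDensity, ENNReal.ofReal_zero] at hT ⊢
  refine tendsto_of_tendsto_of_tendsto_of_le_of_le tendsto_const_nhds hT (fun _ => zero_le)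
    fun ρ => ENNReal.div_le_div_right ?_ _
  exact measure_mono (inter_subset_inter_left _ hST)

lemma ae_hasDensity_one (S : Set (Euc N)) : ∀ᵐ x ∂volume.restrict S, HasDensity S x 1 := by
  filter_upwards [Besicovitch.ae_tendsto_measure_inter_div volume S] with x hx
  rw [HasDensity, ENNReal.ofReal_one]
  refine hx.congr' ?_
  filter_upwards [self_mem_nhdsWithin] with ρ (hρ : (0 : ℝ) < ρ)
  rw [measure_congr (ball_ae_eq_closedBall volume x hρ.ne'),
    measure_congr ((ae_eq_refl S).inter (ball_ae_eq_closedBall volume x hρ.ne'))]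

lemma measure_setOf_hasDensity_zero_inter_self (S : Set (Euc N)) :
    volume ({x | HasDensity S x 0} ∩ S) = 0 := by
  refine measure_mono_null (t := {x | ¬ HasDensity S x 1} ∩ S) ?_
    (le_antisymm ((Measure.le_restrict_apply S _).trans (ae_iff.1 (ae_hasDensity_one S)).le)
      zero_le)
  exact fun x ⟨h₀, hx⟩ => ⟨fun h₁ => zero_ne_one (h₀.unique h₁ le_rfl zero_le_one), hx⟩

end Density

section ApproxLimits

variable {u : Euc N → ℝ} {Ω : Set (Euc N)} {x : Euc N}

lemma approxUpper_eq_top (h : ∀ s : ℝ, ¬ HasDensity {y | y ∈ Ω ∧ s < u y} x 0) :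
    approxUpper u Ω x = ⊤ := by
  rw [approxUpper, sInf_eq_top]
  rintro _ ⟨s, rfl, hs⟩
  exact absurd hs (h s)

lemma hasDensity_setOf_gt_of_approxUpper_eq_bot (h : approxUpper u Ω x = ⊥) (s : ℝ) :
    HasDensity {y | y ∈ Ω ∧ s < u y} x 0 := by
  rw [approxUpper, sInf_eq_bot] at h
  obtain ⟨_, ⟨t, rfl, ht⟩, hts⟩ := h s (EReal.bot_lt_coe s)
  refine ht.mono fun y hy => ?_
  exact ⟨hy.1, (EReal.coe_lt_coe_iff.1 hts).trans hy.2⟩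

lemma approxLower_eq_top_iff :
    approxLower u Ω x = ⊤ ↔ ∀ s : ℝ, HasDensity {y | y ∈ Ω ∧ u y < s} x 0 := by
  rw [approxLower, sSup_eq_top]
  refine ⟨fun h s => ?_, fun h b hb => ?_⟩
  · obtain ⟨_, ⟨t, rfl, ht⟩, hst⟩ := h s (EReal.coe_lt_top s)
    refine ht.mono fun y hy => ?_
    exact ⟨hy.1, hy.2.trans (EReal.coe_lt_coe_iff.1 hst)⟩
  · obtain ⟨s, hbs, -⟩ := EReal.lt_iff_exists_real_btwn.1 hb
    exact ⟨s, ⟨s, rfl, h s⟩, hbs⟩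

lemma HasInfApproxLimit.hasDensity_abs_lt (h : HasInfApproxLimit u Ω x) (s : ℝ) :
    HasDensity {y | y ∈ Ω ∧ |u y| < s} x 0 := by
  rcases h with ⟨-, hlower⟩ | ⟨hupper, -⟩
  · refine (approxLower_eq_top_iff.1 hlower s).mono fun y hy => ?_
    exact ⟨hy.1, (le_abs_self _).trans_lt hy.2⟩
  · refine (hasDensity_setOf_gt_of_approxUpper_eq_bot hupper (-s)).mono fun y hy => ?_
    exact ⟨hy.1, neg_lt_of_abs_lt hy.2⟩

end ApproxLimits

lemma measure_eq_zero_of_subset_hasInfApproxLimit {u : Euc N → ℝ} {Ω C : Set (Euc N)}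
    (hC : C ⊆ {x | x ∈ Ω ∧ HasInfApproxLimit u Ω x}) : volume C = 0 := by
  set S : ℕ → Set (Euc N) := fun n => {y | y ∈ Ω ∧ |u y| < n}
  refine measure_mono_null (t := ⋃ n, {x | HasDensity (S n) x 0} ∩ S n) (fun x hx => ?_)
    (measure_iUnion_null fun n => measure_setOf_hasDensity_zero_inter_self (S n))
  obtain ⟨hxΩ, hx⟩ := hC hx
  obtain ⟨n, hn⟩ := exists_nat_gt |u x|
  exact mem_iUnion.2 ⟨n, hx.hasDensity_abs_lt n, hxΩ, hn⟩

lemma L0Polar.measure_eq_zero {Ω C : Set (Euc N)} (h : L0Polar C Ω) : volume C = 0 :=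
  let ⟨_, _, hC⟩ := h
  measure_eq_zero_of_subset_hasInfApproxLimit hC

theorem exists_measurable_ae_ge_on_nhdsSet_of_measure_eq_zero {X : Type*} [TopologicalSpace X]
    [MeasurableSpace X] [OpensMeasurableSpace X] {μ : Measure X} [μ.OuterRegular] {C : Set X}
    (hC : μ C = 0) :
    ∃ u : X → ℝ, Measurable u ∧ ∀ m : ℕ, ∃ W ∈ 𝓝ˢ C, μ ({y | u y < m} ∩ W) = 0 := by
  obtain ⟨ε, hε, hεsum⟩ := ENNReal.exists_pos_sum_of_countable' one_ne_zero ℕ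
  choose V hCV hVopen hVε using fun k => Set.exists_isOpen_lt_of_lt C (ε k) (hC ▸ hε k)
  have hV : ∀ k, Measurable ((V k).indicator (1 : X → ℝ≥0∞)) := fun k =>
    measurable_one.indicator (hVopen k).measurableSet
  set v : X → ℝ≥0∞ := fun y => ∑' k, (V k).indicator 1 y
  have hv : Measurable v := Measurable.tsum hV
  have hv_int : ∫⁻ y, v y ∂μ ≠ ⊤ := by
    refine ne_top_of_lt (b := 1) ?_
    calc ∫⁻ y, v y ∂μ = ∑' k, ∫⁻ y, (V k).indicator 1 y ∂μ :=
          lintegral_tsum fun k => (hV k).aemeasurable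
      _ ≤ ∑' k, ε k :=
          ENNReal.tsum_le_tsum fun k => (lintegral_indicator_one_le _).trans (hVε k).le
      _ < 1 := hεsum
  refine ⟨fun y => (v y).toReal, hv.ennreal_toReal, fun m => ⟨⋂ k ∈ Finset.range m, V k,
    (isOpen_biInter_finset fun k _ => hVopen k).mem_nhdsSet.2 (subset_iInter₂ fun k _ => hCV k),
    measure_mono_null (fun y ⟨hym, hyW⟩ => ?_) (ae_iff.1 (ae_lt_top hv hv_int))⟩⟩
  have hmv : (m : ℝ≥0∞) ≤ v y := calc
    (m : ℝ≥0∞) = ∑ k ∈ Finset.range m, (V k).indicator 1 y := by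
        rw [Finset.sum_congr rfl fun k hk => indicator_of_mem (mem_iInter₂.1 hyW k hk) 1]
        simp
    _ ≤ v y := ENNReal.sum_le_tsum _
  intro hvy
  exact (ENNReal.toReal_mono hvy.ne hmv).not_gt (by simpa using hym)

lemma l0Polar_of_measure_eq_zero {Ω C : Set (Euc N)} (hΩ : IsOpen Ω) (hC : C ⊆ Ω)
    (h₀ : volume C = 0) : L0Polar C Ω := by
  obtain ⟨u, hu, hW⟩ := exists_measurable_ae_ge_on_nhdsSet_of_measure_eq_zero h₀
  refine ⟨u, hu.aemeasurable, fun x hx => ⟨hC hx, Or.inl ⟨approxUpper_eq_top fun s => ?_,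
    approxLower_eq_top_iff.2 fun s => ?_⟩⟩⟩
  all_goals
    obtain ⟨m, hm⟩ := exists_nat_gt s
    obtain ⟨W, hWC, hW⟩ := hW m
    have hWx : W ∈ 𝓝 x := mem_nhdsSet_iff_forall.1 hWC x hx
  · refine fun h => zero_ne_one (h.unique ?_ le_rfl zero_le_one)
    refine hasDensity_one_of_measure_diff_eq_zero (inter_mem hWx (hΩ.mem_nhds (hC hx)))
      (measure_mono_null ?_ hW)
    rintro y ⟨⟨hyW, hyΩ⟩, hy⟩
    exact ⟨(not_lt.1 fun h => hy ⟨hyΩ, h⟩).trans_lt hm, hyW⟩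
  · refine hasDensity_zero_of_measure_inter_eq_zero hWx (measure_mono_null ?_ hW)
    rintro y ⟨⟨-, hy⟩, hyW⟩
    exact ⟨hy.trans hm, hyW⟩

theorem measure_eq_zero_iff_exists_isOpen_tendsto_zero {X : Type*} [TopologicalSpace X]
    [MeasurableSpace X] {μ : Measure X} [μ.OuterRegular] {Ω C : Set X} (hΩ : IsOpen Ω)
    (hC : C ⊆ Ω) :
    μ C = 0 ↔ ∃ U : ℕ → Set X, (∀ k, IsOpen (U k) ∧ U k ⊆ Ω ∧ C ⊆ U k) ∧
      Tendsto (fun k => μ (U k)) atTop (𝓝 0) := by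
  refine ⟨fun h₀ => ?_, fun ⟨U, hU, hlim⟩ =>
    le_antisymm (ge_of_tendsto' hlim fun k => measure_mono (hU k).2.2) zero_le⟩
  have hlt : ∀ k : ℕ, μ C < (k : ℝ≥0∞)⁻¹ := fun k =>
    h₀ ▸ ENNReal.inv_pos.2 (ENNReal.natCast_ne_top k)
  choose V hCV hVopen hVlt using fun k => Set.exists_isOpen_lt_of_lt C _ (hlt k)
  refine ⟨fun k => V k ∩ Ω,
    fun k => ⟨(hVopen k).inter hΩ, inter_subset_right, subset_inter (hCV k) hC⟩, ?_⟩
  exact tendsto_of_tendsto_of_tendsto_of_le_of_le tendsto_const_nhds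
    ENNReal.tendsto_inv_nat_nhds_zero (fun _ => zero_le)
    fun k => (measure_mono inter_subset_left).trans (hVlt k).le

/-- For `C ⊆ Ω ⊆ ℝ^N` (`Ω` open), the following are equivalent:
(a) `C` is `L⁰`-polar in `Ω`; (b) `λ^N(C) = 0`;
(c) there is a sequence of open sets `U_k ⊆ Ω` containing `C` with `λ^N(U_k) → 0`. -/
theorem statement0 {N : ℕ} (Ω : Set (Euc N)) (hΩ : IsOpen Ω)
    (C : Set (Euc N)) (hC : C ⊆ Ω) :
    (L0Polar C Ω ↔ volume C = 0) ∧
    (volume C = 0 ↔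
      ∃ U : ℕ → Set (Euc N), (∀ k, IsOpen (U k) ∧ U k ⊆ Ω ∧ C ⊆ U k) ∧
        Tendsto (fun k => volume (U k)) atTop (𝓝 0)) :=
  ⟨⟨L0Polar.measure_eq_zero, l0Polar_of_measure_eq_zero hΩ hC⟩,
    measure_eq_zero_iff_exists_isOpen_tendsto_zero hΩ hC⟩
end
end

section
/- Let Ω ⊆ ℝ^N be open and let C ⊆ Ω be relatively closed in Ω with λ^N(C) = 0. Then C is GBV-polar in Ω, i.e. there exists u ∈ GBV(Ω) with C ⊆ {x ∈ Ω : the approximate limit ũ(x) exists and |ũ(x)| = +∞}. -/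
open MeasureTheory Metric Filter Set
open scoped ENNReal Topology symmDiff

noncomputable section

variable {N : ℕ}

/-! `C` is the pole set of `u = 1 / dist(·, C)` (of `u = 0` if `C = ∅`). Since `C` is relatively
closed, every point of `Ω \ C` is at positive distance from `C`; so near a point of `C`, outside
the null set `C`, `u` exceeds any given bound, and its approximate limit there is `+∞`. Off `C`
the truncation of `u` at level `m` is the Lipschitz function `1 / max(dist(·, C), 1/m)`, and a
Lipschitz function has finite variation on sets of finite measure: integrating by parts against
its a.e. derivative (Rademacher), `∫ v div φ` is bounded by the Lipschitz constant times the
measure of the support of `φ`. -/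

open scoped NNReal

theorem abs_integral_mul_fderiv_le_of_lipschitzWith {E : Type*} [NormedAddCommGroup E]
    [NormedSpace ℝ E] [FiniteDimensional ℝ E] [MeasurableSpace E] [BorelSpace E]
    {μ : Measure E} [μ.IsAddHaarMeasure] {v ψ : E → ℝ} {L : ℝ≥0}
    (hv : LipschitzWith L v) (hψ : ContDiff ℝ 1 ψ) (hψc : HasCompactSupport ψ) (e : E) :
    |∫ x, v x * fderiv ℝ ψ x e ∂μ| ≤ L * ‖e‖ * ∫ x, |ψ x| ∂μ := by
  obtain ⟨K, hψL⟩ := hψ.lipschitzWith_of_hasCompactSupport hψc one_ne_zero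
  have hdiff := hψ.differentiable one_ne_zero
  have ibp : ∫ x, v x * fderiv ℝ ψ x e ∂μ = -∫ x, lineDeriv ℝ v x e * ψ x ∂μ := by
    rw [hv.integral_lineDeriv_mul_eq hψL hψc e, ← integral_neg]
    congr 1 with x
    rw [(hdiff x).lineDeriv_eq_fderiv, map_neg]
    ring
  rw [ibp, abs_neg, ← Real.norm_eq_abs, ← integral_const_mul]
  refine norm_integral_le_of_norm_le
    ((hψ.continuous.integrable_of_hasCompactSupport hψc (μ := μ)).abs.const_mul _)
    (.of_forall fun x => ?_)
  rw [norm_mul, Real.norm_eq_abs, Real.norm_eq_abs]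
  exact mul_le_mul_of_nonneg_right (norm_lineDeriv_le_of_lipschitz ℝ hv) (abs_nonneg _)

theorem variation_le_of_lipschitzWith {N : ℕ} {v : Euc N → ℝ} {L : ℝ≥0}
    (hv : LipschitzWith L v) {Ω : Set (Euc N)} (hΩ : volume Ω ≠ ⊤) :
    variation v Ω ≤ ENNReal.ofReal (N * (L * volume.real Ω)) := by
  refine iSup₂_le fun φ ⟨hφ, hφc, hφΩ, hφ1⟩ => ENNReal.ofReal_le_ofReal ?_
  set ψ : Fin N → Euc N → ℝ := fun i x => φ x i
  have hψ (i : Fin N) : ContDiff ℝ 1 (ψ i) :=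
    (EuclideanSpace.proj (𝕜 := ℝ) i).contDiff.comp hφ
  have hψc (i : Fin N) : HasCompactSupport (ψ i) :=
    hφc.comp_left (g := fun y : Euc N => y i) rfl
  have hfderiv (i : Fin N) (x : Euc N) : fderiv ℝ (ψ i) x (EuclideanSpace.single i 1) =
      fderiv ℝ φ x (EuclideanSpace.single i 1) i := by
    change fderiv ℝ (EuclideanSpace.proj (𝕜 := ℝ) i ∘ φ) x _ = _
    rw [((EuclideanSpace.proj (𝕜 := ℝ) i).hasFDerivAt.comp x
      ((hφ.differentiable one_ne_zero) x).hasFDerivAt).fderiv]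
    rfl
  have hint (i : Fin N) :
      Integrable fun x => v x * fderiv ℝ (ψ i) x (EuclideanSpace.single i 1) :=
    (hv.continuous.mul (((hψ i).continuous_fderiv one_ne_zero).clm_apply continuous_const))
      |>.integrable_of_hasCompactSupport ((hψc i).fderiv_apply ℝ _).mul_left
  have hsplit : ∫ x in Ω, v x * diverg φ x =
      ∑ i, ∫ x, v x * fderiv ℝ (ψ i) x (EuclideanSpace.single i 1) := by
    rw [setIntegral_eq_integral_of_forall_compl_eq_zero fun x hx => ?_,
      ← integral_finsetSum _ fun i _ => hint i]
    · simp only [diverg, Finset.mul_sum, hfderiv]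
    · simp [diverg, fderiv_of_notMem_tsupport ℝ fun h => hx (hφΩ h)]
  have hψ_le (i : Fin N) : ∫ x, |ψ i x| ≤ volume.real Ω := by
    rw [← setIntegral_eq_integral_of_forall_compl_eq_zero (s := Ω) fun x hx => by
      simp [ψ, image_eq_zero_of_notMem_tsupport fun h => hx (hφΩ h)]]
    refine (Real.le_norm_self _).trans
      ((norm_setIntegral_le_of_norm_le_const (C := 1) hΩ.lt_top fun x _ => ?_).trans_eq
        (one_mul _))
    simpa [ψ] using (PiLp.norm_apply_le (φ x) i).trans (hφ1 x)
  calc ∫ x in Ω, v x * diverg φ x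
      ≤ ∑ i, |∫ x, v x * fderiv ℝ (ψ i) x (EuclideanSpace.single i 1)| :=
        hsplit ▸ (le_abs_self _).trans (Finset.abs_sum_le_sum_abs _ _)
    _ ≤ ∑ _i : Fin N, L * volume.real Ω := Finset.sum_le_sum fun i _ => by
        have := abs_integral_mul_fderiv_le_of_lipschitzWith (μ := volume) hv (hψ i) (hψc i)
          (EuclideanSpace.single i 1)
        rw [PiLp.norm_single, norm_one, mul_one] at this
        exact this.trans (mul_le_mul_of_nonneg_left (hψ_le i) L.coe_nonneg)
    _ = N * (L * volume.real Ω) := by simp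

theorem variation_congr_ae {N : ℕ} {u v : Euc N → ℝ} {Ω : Set (Euc N)}
    (h : u =ᵐ[volume.restrict Ω] v) : variation u Ω = variation v Ω :=
  iSup_congr fun φ => iSup_congr fun _ =>
    congrArg ENNReal.ofReal (integral_congr_ae (h.mul (EventuallyEq.refl _ (diverg φ))))

theorem memBVloc_of_ae_eq_lipschitzWith {N : ℕ} {u v : Euc N → ℝ} {L : ℝ≥0}
    {Ω : Set (Euc N)} (hv : LipschitzWith L v) (huv : u =ᵐ[volume.restrict Ω] v) :
    MemBVloc u Ω := by
  intro Ω' _ hcomp hsub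
  have huv' : u =ᵐ[volume.restrict Ω'] v :=
    ae_restrict_of_ae_restrict_of_subset (subset_closure.trans hsub) huv
  have hfin : volume Ω' ≠ ⊤ := ((measure_mono subset_closure).trans_lt hcomp.measure_lt_top).ne
  refine ⟨((hv.continuous.continuousOn.integrableOn_compact hcomp).mono_set
    subset_closure).congr huv'.symm, ?_⟩
  rw [variation_congr_ae huv']
  exact (variation_le_of_lipschitzWith hv hfin).trans_lt ENNReal.ofReal_lt_top

theorem lipschitzWith_inv_max_const {a : ℝ} (ha : 0 < a) :
    LipschitzWith (a ^ 2)⁻¹.toNNReal fun t : ℝ => (max t a)⁻¹ := by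
  refine LipschitzWith.of_dist_le_mul fun s t => ?_
  have hs : 0 < max s a := ha.trans_le (le_max_right _ _)
  have ht : 0 < max t a := ha.trans_le (le_max_right _ _)
  rw [Real.dist_eq, Real.dist_eq, Real.coe_toNNReal _ (by positivity),
    inv_sub_inv hs.ne' ht.ne', abs_div, abs_of_pos (mul_pos hs ht), div_le_iff₀ (mul_pos hs ht)]
  calc |max t a - max s a| ≤ |s - t| := abs_sub_comm s t ▸ abs_max_sub_max_le_abs t s a
    _ = (a ^ 2)⁻¹ * |s - t| * (a * a) := by field_simp
    _ ≤ (a ^ 2)⁻¹ * |s - t| * (max s a * max t a) := by gcongr <;> exact le_max_right _ _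

theorem max_neg_min_inv_eq_inv_max {m t : ℝ} (hm : 0 < m) (ht : 0 < t) :
    max (-m) (min t⁻¹ m) = (max t m⁻¹)⁻¹ := by
  rw [max_eq_right ((neg_nonpos.2 hm.le).trans (le_min (inv_nonneg.2 ht.le) hm.le))]
  rcases le_total t m⁻¹ with h | h
  · rw [max_eq_right h, inv_inv, min_eq_right ((le_inv_comm₀ ht hm).1 h)]
  · rw [max_eq_left h, min_eq_left ((inv_le_comm₀ ht hm).2 h)]

theorem infDist_pos_of_notMem {X : Type*} [MetricSpace X] {C Ω : Set X}
    (hclosed : closure C ∩ Ω = C) (hne : C.Nonempty) {y : X}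
    (hyΩ : y ∈ Ω) (hyC : y ∉ C) : 0 < infDist y C := by
  rw [← infDist_closure]
  exact (isClosed_closure.notMem_iff_infDist_pos hne.closure).1
    fun h => hyC (hclosed ▸ ⟨h, hyΩ⟩)

theorem truncation_inv_infDist_ae_eq {N : ℕ} {C Ω : Set (Euc N)} (hΩ : MeasurableSet Ω)
    (hclosed : closure C ∩ Ω = C) (hne : C.Nonempty) (hvol : volume C = 0) {m : ℝ}
    (hm : 0 < m) :
    (fun y => max (-m) (min (infDist y C)⁻¹ m)) =ᵐ[volume.restrict Ω]
      fun y => (max (infDist y C) m⁻¹)⁻¹ := by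
  filter_upwards [ae_restrict_mem hΩ, ae_restrict_of_ae (measure_eq_zero_iff_ae_notMem.1 hvol)]
    with y hyΩ hyC
  exact max_neg_min_inv_eq_inv_max hm (infDist_pos_of_notMem hclosed hne hyΩ hyC)

section Density

variable {N : ℕ} {A : Set (Euc N)} {x : Euc N} {ρ₀ : ℝ}

theorem hasDensity_zero_of_measure_inter_ball_eq_zero (hρ₀ : 0 < ρ₀)
    (h : volume (A ∩ ball x ρ₀) = 0) : HasDensity A x 0 := by
  rw [HasDensity, ENNReal.ofReal_zero]
  refine tendsto_const_nhds.congr' ?_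
  filter_upwards [Ioc_mem_nhdsGT hρ₀] with ρ hρ
  rw [measure_mono_null (inter_subset_inter_right A (ball_subset_ball hρ.2)) h, ENNReal.zero_div]

theorem hasDensity_one_of_measure_ball_diff_eq_zero (hρ₀ : 0 < ρ₀)
    (h : volume (ball x ρ₀ \ A) = 0) : HasDensity A x 1 := by
  rw [HasDensity, ENNReal.ofReal_one]
  refine tendsto_const_nhds.congr' ?_
  filter_upwards [Ioc_mem_nhdsGT hρ₀] with ρ hρ
  have hfull : (A ∩ ball x ρ : Set (Euc N)) =ᵐ[volume] (ball x ρ : Set (Euc N)) := by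
    refine ae_eq_set.2
      ⟨by rw [sdiff_eq_empty.2 inter_subset_right, measure_empty], measure_mono_null ?_ h⟩
    rintro y ⟨hy, hyA⟩
    exact ⟨ball_subset_ball hρ.2 hy, fun hA => hyA ⟨hA, hy⟩⟩
  rw [measure_congr hfull,
    ENNReal.div_self (measure_ball_pos _ x hρ.1).ne' measure_ball_lt_top.ne]

theorem HasDensity.zero_ne_one (h₀ : HasDensity A x 0) (h₁ : HasDensity A x 1) : False := by
  simpa using tendsto_nhds_unique h₀ h₁

end Density

theorem hasApproxLimitTop_of_forall_exists_measure_le_eq_zero {N : ℕ} {u : Euc N → ℝ}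
    {Ω : Set (Euc N)} {x : Euc N} (hΩ : Ω ∈ 𝓝 x)
    (h : ∀ s : ℝ, ∃ ρ > 0, volume {y ∈ ball x ρ | u y ≤ s} = 0) :
    HasApproxLimitTop u Ω x := by
  constructor
  · rw [approxUpper, sInf_eq_top]
    rintro _ ⟨s, rfl, hs⟩
    exfalso
    obtain ⟨ε, hε, hball⟩ := Metric.mem_nhds_iff.1 hΩ
    obtain ⟨ρ, hρ, hnull⟩ := h s
    refine hs.zero_ne_one (hasDensity_one_of_measure_ball_diff_eq_zero (lt_min hε hρ)
      (measure_mono_null (fun y ⟨hy, hyA⟩ => ?_) hnull))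
    refine ⟨ball_subset_ball (min_le_right _ _) hy, not_lt.1 fun hsy => hyA ⟨?_, hsy⟩⟩
    exact hball (ball_subset_ball (min_le_left _ _) hy)
  · rw [approxLower, sSup_eq_top]
    intro b hb
    obtain ⟨s, hbs, -⟩ := EReal.exists_between_coe_real hb
    obtain ⟨ρ, hρ, hnull⟩ := h s
    refine ⟨s, ⟨s, rfl, hasDensity_zero_of_measure_inter_ball_eq_zero hρ
      (measure_mono_null ?_ hnull)⟩, hbs⟩
    rintro y ⟨⟨-, hys⟩, hy⟩
    exact ⟨hy, hys.le⟩

theorem exists_measure_inv_infDist_le_eq_zero {N : ℕ} {C Ω : Set (Euc N)}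
    (hclosed : closure C ∩ Ω = C) (hvol : volume C = 0) {x : Euc N} (hΩ : Ω ∈ 𝓝 x)
    (hx : x ∈ C) (s : ℝ) :
    ∃ ρ > 0, volume {y ∈ ball x ρ | (infDist y C)⁻¹ ≤ s} = 0 := by
  obtain ⟨ε, hε, hball⟩ := Metric.mem_nhds_iff.1 hΩ
  have hs : 0 < max s 1 := lt_max_of_lt_right one_pos
  refine ⟨min ε (max s 1)⁻¹, lt_min hε (inv_pos.2 hs),
    measure_mono_null (fun y ⟨hy, hys⟩ => ?_) hvol⟩
  by_contra hyC
  have hpos := infDist_pos_of_notMem hclosed ⟨x, hx⟩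
    (hball (ball_subset_ball (min_le_left _ _) hy)) hyC
  have hlt : infDist y C < (max s 1)⁻¹ :=
    (infDist_le_dist_of_mem hx).trans_lt ((mem_ball.1 hy).trans_le (min_le_right _ _))
  linarith [le_max_left s 1, (lt_inv_comm₀ hpos hs).1 hlt]

/-- if `C ⊆ Ω` is relatively closed in `Ω` and `λ^N(C) = 0`, then `C` is
`GBV`-polar in `Ω`. -/
theorem statement3 {N : ℕ} (Ω : Set (Euc N)) (hΩ : IsOpen Ω)
    (C : Set (Euc N)) (hC : C ⊆ Ω) (hclosed : closure C ∩ Ω = C)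
    (hvol : volume C = 0) :
    GBVPolar C Ω := by
  rcases C.eq_empty_or_nonempty with rfl | hne
  · exact ⟨fun _ => 0, ⟨aemeasurable_const, fun m _ =>
      memBVloc_of_ae_eq_lipschitzWith (LipschitzWith.const (max (-m) (min 0 m))) .rfl⟩,
      empty_subset _⟩
  refine ⟨fun y => (infDist y C)⁻¹, ⟨(continuous_infDist_pt C).measurable.inv.aemeasurable,
    fun m hm => ?_⟩, fun x hx => ⟨hC hx, Or.inl ?_⟩⟩
  · exact memBVloc_of_ae_eq_lipschitzWith
      ((lipschitzWith_inv_max_const (inv_pos.2 hm)).comp (lipschitz_infDist_pt C))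
      (truncation_inv_infDist_ae_eq hΩ.measurableSet hclosed hne hvol hm)
  · have hΩx := hΩ.mem_nhds (hC hx)
    exact hasApproxLimitTop_of_forall_exists_measure_le_eq_zero hΩx
      (exists_measure_inv_infDist_le_eq_zero hclosed hvol hΩx hx)
end
end
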